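/- arXiv:2105.07470 — 2 statements merged into one kernel-verified Lean document; each statement's English description precedes it below -/
import Mathlib

section
/- Let 𝒜 be an NFA that recognizes a language L ⊆ Σ*. Suppose that its forward determinization has k states and its backward determinization has ℓ states. Then there is a UFA with at most min{k, ℓ} states that recognizes the complement language Σ* \ L. -/
/-- A nondeterministic finite automaton with state type `Q` and alphabet `A`:
transition relation `δ`, initial states `I`, accepting states `F`. -/
structure NFA' (Q A : Type) where
  δ : Q → A → Q → Prop
  I : Set Q
  F : Set Q

namespace NFA'

variable {Q A : Type}

/-- `M.Steps q w q'` holds iff there is a run from `q` to `q'` reading the word `w`. -/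
def Steps (M : NFA' Q A) : Q → List A → Q → Prop
  | q, [], q' => q = q'
  | q, a :: w, q' => ∃ p, M.δ q a p ∧ M.Steps p w q'

/-- An accepting run for the word `w`, given as the sequence of visited states. -/
def IsAccRun (M : NFA' Q A) (w : List A) (r : Fin (w.length + 1) → Q) : Prop :=
  r 0 ∈ M.I ∧ r (Fin.last w.length) ∈ M.F ∧
    ∀ i : Fin w.length, M.δ (r i.castSucc) (w.get i) (r i.succ)

/-- The language recognized by `M`: words with at least one accepting run. -/
def Lang (M : NFA' Q A) : Set (List A) :=
  {w | ∃ r, M.IsAccRun w r}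

/-- `M` is unambiguous (a UFA) if every word has at most one accepting run. -/
def Unambiguous (M : NFA' Q A) : Prop :=
  ∀ (w : List A) (r r' : Fin (w.length + 1) → Q),
    M.IsAccRun w r → M.IsAccRun w r' → r = r'

/-- The state set `{δ(I,w) | w ∈ Σ*}` of the forward determinization of `M`. -/
def fwdStates (M : NFA' Q A) : Set (Set Q) :=
  {S | ∃ w : List A, S = {r | ∃ q ∈ M.I, M.Steps q w r}}

/-- The state set `{δ⁻¹(w,F) | w ∈ Σ*}` of the backward determinization of `M`. -/
def bwdStates (M : NFA' Q A) : Set (Set Q) :=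
  {S | ∃ w : List A, S = {r | ∃ q ∈ M.F, M.Steps r w q}}

end NFA'

/-!
The forward determinization is a DFA, so complementing its accepting states gives a
deterministic, hence unambiguous, automaton for the complement with `k` states. Dually, the
backward determinization is co-deterministic: every state `S` has at most one predecessor
`δ⁻¹(a, S)` under each letter and `F` is its only accepting state. Complementing its
initial states therefore gives a co-deterministic automaton for the complement with `ℓ`
states, and co-deterministic automata are unambiguous as well, since an accepting run is
determined by its last state.
-/

namespace NFA'

variable {Q A : Type} (M : NFA' Q A)

section Steps

variable {M} {q r : Q} {a : A} {w : List A}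

@[simp]
theorem steps_nil : M.Steps q [] r ↔ q = r := Iff.rfl

@[simp]
theorem steps_cons : M.Steps q (a :: w) r ↔ ∃ p, M.δ q a p ∧ M.Steps p w r := Iff.rfl

theorem steps_append {u v : List A} :
    M.Steps q (u ++ v) r ↔ ∃ p, M.Steps q u p ∧ M.Steps p v r := by
  induction u generalizing q with
  | nil => simp
  | cons a u ih => simp only [List.cons_append, steps_cons, ih]; aesop

theorem exists_run_iff_steps :
    (∃ ρ : Fin (w.length + 1) → Q, ρ 0 = q ∧ ρ (Fin.last w.length) = r ∧
      ∀ i : Fin w.length, M.δ (ρ i.castSucc) (w.get i) (ρ i.succ)) ↔ M.Steps q w r := by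
  induction w generalizing q with
  | nil =>
    refine ⟨fun ⟨ρ, h0, hr, _⟩ => h0 ▸ hr, fun hqr => ⟨fun _ => q, rfl, hqr, nofun⟩⟩
  | cons a w ih =>
    simp only [Fin.exists_fin_succ_pi, Fin.cons_zero, List.length_cons, Fin.forall_fin_succ,
      steps_cons, ← ih]
    aesop

theorem mem_lang_iff : w ∈ M.Lang ↔ ∃ q ∈ M.I, ∃ r ∈ M.F, M.Steps q w r := by
  simp only [Lang, IsAccRun, Set.mem_ofPred_eq, ← exists_run_iff_steps]
  aesop

end Steps

/-- `δ(S, w)`. -/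
def post (S : Set Q) (w : List A) : Set Q := {r | ∃ q ∈ S, M.Steps q w r}

/-- `δ⁻¹(w, S)`. -/
def pre (S : Set Q) (w : List A) : Set Q := {r | ∃ q ∈ S, M.Steps r w q}

section PostPre

variable {M} {S : Set Q} {w : List A}

@[simp]
theorem post_nil : M.post S [] = S := by simp [post]

@[simp]
theorem pre_nil : M.pre S [] = S := by simp [pre]

theorem post_append (u v : List A) : M.post S (u ++ v) = M.post (M.post S u) v := by
  ext; simp only [post, steps_append, Set.mem_ofPred_eq]; aesop

theorem pre_append (u v : List A) : M.pre S (u ++ v) = M.pre (M.pre S v) u := by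
  ext; simp only [pre, steps_append, Set.mem_ofPred_eq]; aesop

theorem mem_lang_iff_not_disjoint_post : w ∈ M.Lang ↔ ¬Disjoint (M.post M.I w) M.F := by
  simp only [mem_lang_iff, Set.not_disjoint_iff, post, Set.mem_ofPred_eq]; aesop

theorem mem_lang_iff_not_disjoint_pre : w ∈ M.Lang ↔ ¬Disjoint (M.pre M.F w) M.I := by
  simp only [mem_lang_iff, Set.not_disjoint_iff, pre, Set.mem_ofPred_eq]; aesop

theorem post_mem_fwdStates (hS : S ∈ M.fwdStates) (w : List A) : M.post S w ∈ M.fwdStates := by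
  obtain ⟨u, rfl⟩ := hS
  exact ⟨u ++ w, (post_append u w).symm⟩

theorem pre_mem_bwdStates (hS : S ∈ M.bwdStates) (w : List A) : M.pre S w ∈ M.bwdStates := by
  obtain ⟨u, rfl⟩ := hS
  exact ⟨w ++ u, (pre_append w u).symm⟩

theorem I_mem_fwdStates : M.I ∈ M.fwdStates := ⟨[], post_nil.symm⟩

theorem F_mem_bwdStates : M.F ∈ M.bwdStates := ⟨[], pre_nil.symm⟩

end PostPre

section Unambiguous

variable {M}

theorem unambiguous_of_deterministic (hI : M.I.Subsingleton)
    (hδ : ∀ q a p p', M.δ q a p → M.δ q a p' → p = p') : M.Unambiguous := by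
  intro w ρ ρ' hρ hρ'
  funext i
  induction i using Fin.induction with
  | zero => exact hI hρ.1 hρ'.1
  | succ i ih => exact hδ _ _ _ _ (ih ▸ hρ.2.2 i) (hρ'.2.2 i)

theorem unambiguous_of_codeterministic (hF : M.F.Subsingleton)
    (hδ : ∀ q q' a p, M.δ q a p → M.δ q' a p → q = q') : M.Unambiguous := by
  intro w ρ ρ' hρ hρ'
  funext i
  induction i using Fin.reverseInduction with
  | last => exact hF hρ.2.1 hρ'.2.1
  | cast i ih => exact hδ _ _ _ _ (hρ.2.2 i) (ih ▸ hρ'.2.2 i)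

end Unambiguous

def complFwdDet : NFA' M.fwdStates A where
  δ S a T := (T : Set Q) = M.post S [a]
  I := {S | (S : Set Q) = M.I}
  F := {S | Disjoint (S : Set Q) M.F}

def complBwdDet : NFA' M.bwdStates A where
  δ S a T := (S : Set Q) = M.pre T [a]
  I := {S | Disjoint (S : Set Q) M.I}
  F := {S | (S : Set Q) = M.F}

section Complement

variable {M}

theorem complFwdDet_steps_iff {S T : M.fwdStates} {w : List A} :
    M.complFwdDet.Steps S w T ↔ (T : Set Q) = M.post S w := by
  induction w generalizing S with
  | nil => simp [Subtype.ext_iff, eq_comm]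
  | cons a w ih =>
    rw [steps_cons, ← List.singleton_append, post_append]
    constructor
    · rintro ⟨P, hP, hPT⟩
      rw [ih.1 hPT, show (P : Set Q) = M.post S [a] from hP]
    · intro hT
      exact ⟨⟨_, post_mem_fwdStates S.2 [a]⟩, rfl, ih.2 hT⟩

theorem complBwdDet_steps_iff {S T : M.bwdStates} {w : List A} :
    M.complBwdDet.Steps S w T ↔ (S : Set Q) = M.pre T w := by
  induction w generalizing S with
  | nil => simp [Subtype.ext_iff]
  | cons a w ih =>
    rw [steps_cons, ← List.singleton_append, pre_append]
    constructor
    · rintro ⟨P, hSP, hPT⟩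
      rw [show (S : Set Q) = M.pre P [a] from hSP, ih.1 hPT]
    · intro hS
      exact ⟨⟨_, pre_mem_bwdStates T.2 w⟩, hS, ih.2 rfl⟩

theorem complFwdDet_lang : M.complFwdDet.Lang = M.Langᶜ := by
  ext w
  rw [Set.mem_compl_iff, mem_lang_iff_not_disjoint_post (M := M), not_not, mem_lang_iff]
  constructor
  · rintro ⟨S, hS, T, hT, hST⟩
    rw [complFwdDet_steps_iff, show (S : Set Q) = M.I from hS] at hST
    exact hST ▸ hT
  · intro h
    exact ⟨⟨M.I, I_mem_fwdStates⟩, rfl, ⟨_, post_mem_fwdStates I_mem_fwdStates w⟩, h,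
      complFwdDet_steps_iff.2 rfl⟩

theorem complBwdDet_lang : M.complBwdDet.Lang = M.Langᶜ := by
  ext w
  rw [Set.mem_compl_iff, mem_lang_iff_not_disjoint_pre (M := M), not_not, mem_lang_iff]
  constructor
  · rintro ⟨S, hS, T, hT, hST⟩
    rw [complBwdDet_steps_iff, show (T : Set Q) = M.F from hT] at hST
    exact hST ▸ hS
  · intro h
    exact ⟨⟨_, pre_mem_bwdStates F_mem_bwdStates w⟩, h, ⟨M.F, F_mem_bwdStates⟩, rfl,
      complBwdDet_steps_iff.2 rfl⟩

theorem complFwdDet_unambiguous : M.complFwdDet.Unambiguous :=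
  unambiguous_of_deterministic (fun _ hS _ hT => Subtype.ext (hS.trans hT.symm))
    fun _ _ _ _ hT hT' => Subtype.ext (hT.trans hT'.symm)

theorem complBwdDet_unambiguous : M.complBwdDet.Unambiguous :=
  unambiguous_of_codeterministic (fun _ hS _ hT => Subtype.ext (hS.trans hT.symm))
    fun _ _ _ _ hS hS' => Subtype.ext (hS.trans hS'.symm)

end Complement

end NFA'

theorem complement_min_det_general {Q A : Type} [Fintype Q]
    (M : NFA' Q A) (k ℓ : ℕ)
    (hk : M.fwdStates.ncard = k) (hℓ : M.bwdStates.ncard = ℓ) :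
    ∃ (Q' : Type) (_ : Fintype Q') (M' : NFA' Q' A),
      M'.Unambiguous ∧ M'.Lang = M.Langᶜ ∧ Fintype.card Q' ≤ min k ℓ := by
  rcases le_total k ℓ with hkℓ | hℓk
  · refine ⟨M.fwdStates, Fintype.ofFinite _, M.complFwdDet,
      NFA'.complFwdDet_unambiguous, NFA'.complFwdDet_lang, ?_⟩
    rw [Fintype.card_eq_nat_card, Nat.card_coe_set_eq]
    omega
  · refine ⟨M.bwdStates, Fintype.ofFinite _, M.complBwdDet,
      NFA'.complBwdDet_unambiguous, NFA'.complBwdDet_lang, ?_⟩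
    rw [Fintype.card_eq_nat_card, Nat.card_coe_set_eq]
    omega

/-- If the forward determinization of an NFA `M` has `k` states and its backward
determinization has `ℓ` states, then there is a UFA with at most `min k ℓ` states
recognizing the complement of `L(M)`. -/
theorem complement_min_det {Q A : Type} [Fintype Q] [Fintype A]
    (M : NFA' Q A) (k ℓ : ℕ)
    (hk : M.fwdStates.ncard = k) (hℓ : M.bwdStates.ncard = ℓ) :
    ∃ (Q' : Type) (_ : Fintype Q') (M' : NFA' Q' A),
      M'.Unambiguous ∧ M'.Lang = M.Langᶜ ∧ Fintype.card Q' ≤ min k ℓ :=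
  complement_min_det_general M k ℓ hk hℓ
end

section
/- Let 𝒜 = (Q,Σ,δ,I,F) be a UFA. Suppose that its forward determinization has k states and its backward determinization has ℓ states. Then there exists a simple graph G on the vertex set Q that has at least k cliques and at least ℓ cocliques. -/
/-!
In a UFA, a forward state `δ(I,u)` and a backward state `δ⁻¹(w,F)` share at most one
state: two common states `p ≠ p'` would give two accepting runs of `u w`, one through `p`
and one through `p'` after reading `u`. Joining two states whenever some forward state
contains both therefore makes every forward state a clique and every backward state a
coclique.
-/

theorem SimpleGraph.exists_isClique_isIndepSet_of_inter_subsingleton {V : Type*}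
    (𝓢 𝓣 : Set (Set V)) (h : ∀ S ∈ 𝓢, ∀ T ∈ 𝓣, (S ∩ T).Subsingleton) :
    ∃ G : SimpleGraph V, 𝓢 ⊆ {X | G.IsClique X} ∧ 𝓣 ⊆ {Y | G.IsIndepSet Y} := by
  refine ⟨fromRel fun x y => ∃ S ∈ 𝓢, x ∈ S ∧ y ∈ S, ?_, ?_⟩
  · intro S hS x hx y hy hxy
    exact (fromRel_adj _ x y).2 ⟨hxy, .inl ⟨S, hS, hx, hy⟩⟩
  · intro T hT x hxT y hyT hxy hadj
    obtain ⟨-, ⟨S, hS, hxS, hyS⟩ | ⟨S, hS, hyS, hxS⟩⟩ := (fromRel_adj _ x y).1 hadj <;>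
      exact hxy (h S hS T hT ⟨hxS, hxT⟩ ⟨hyS, hyT⟩)

namespace NFA'

variable {Q A : Type} {M : NFA' Q A}

variable (M) in
def IsRun (w : List A) (r : Fin (w.length + 1) → Q) : Prop :=
  ∀ i : Fin w.length, M.δ (r i.castSucc) (w.get i) (r i.succ)

lemma IsRun.cons {a : A} {w : List A} {q : Q} {r : Fin (w.length + 1) → Q}
    (hr : M.IsRun w r) (hq : M.δ q a (r 0)) : M.IsRun (a :: w) (Fin.cons q r) := by
  intro i
  induction i using Fin.cases with
  | zero => exact hq
  | succ j => exact hr j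

lemma exists_isRun_of_steps : ∀ {w : List A} {q q' : Q}, M.Steps q w q' →
    ∃ r : Fin (w.length + 1) → Q, M.IsRun w r ∧ r 0 = q ∧ r (Fin.last w.length) = q'
  | [], q, _, rfl => ⟨fun _ => q, fun i => i.elim0, rfl, rfl⟩
  | _ :: _, q, _, ⟨_, hqp, hp⟩ =>
    let ⟨r, hr, hr0, hrl⟩ := exists_isRun_of_steps hp
    ⟨Fin.cons q r, hr.cons (hr0 ▸ hqp), rfl, hrl⟩

lemma exists_isRun_of_steps_of_steps : ∀ {u w : List A} {q p q' : Q},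
    M.Steps q u p → M.Steps p w q' →
    ∃ r : Fin ((u ++ w).length + 1) → Q, M.IsRun (u ++ w) r ∧ r 0 = q ∧
      r (Fin.last _) = q' ∧ r ⟨u.length, by simp⟩ = p
  | [], _, _, _, _, rfl, hw =>
    let ⟨r, hr, hr0, hrl⟩ := exists_isRun_of_steps hw
    ⟨r, hr, hr0, hrl, hr0⟩
  | _ :: _, _, q, _, _, ⟨_, hqs, hs⟩, hw =>
    let ⟨r, hr, hr0, hrl, hrp⟩ := exists_isRun_of_steps_of_steps hs hw
    ⟨Fin.cons q r, hr.cons (hr0 ▸ hqs), rfl, hrl, hrp⟩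

theorem Unambiguous.inter_subsingleton (hM : M.Unambiguous) {S T : Set Q}
    (hS : S ∈ M.fwdStates) (hT : T ∈ M.bwdStates) : (S ∩ T).Subsingleton := by
  obtain ⟨u, rfl⟩ := hS
  obtain ⟨w, rfl⟩ := hT
  rintro p ⟨⟨i, hi, hip⟩, f, hf, hpf⟩ p' ⟨⟨i', hi', hip'⟩, f', hf', hpf'⟩
  obtain ⟨r, hr, hr0, hrl, hrp⟩ := exists_isRun_of_steps_of_steps hip hpf
  obtain ⟨r', hr', hr0', hrl', hrp'⟩ := exists_isRun_of_steps_of_steps hip' hpf'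
  have hrr' : r = r' := hM _ r r' ⟨hr0 ▸ hi, hrl ▸ hf, hr⟩ ⟨hr0' ▸ hi', hrl' ▸ hf', hr'⟩
  rw [← hrp, ← hrp', hrr']

end NFA'

theorem ufa_graph_many_cliques_cocliques_general {Q A : Type} [Fintype Q]
    (M : NFA' Q A) (hM : M.Unambiguous) (k ℓ : ℕ)
    (hk : M.fwdStates.ncard = k) (hℓ : M.bwdStates.ncard = ℓ) :
    ∃ G : SimpleGraph Q,
      k ≤ {X : Set Q | G.IsClique X}.ncard ∧
      ℓ ≤ {Y : Set Q | Y.Pairwise fun u v => ¬ G.Adj u v}.ncard := by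
  obtain ⟨G, hcliques, hcocliques⟩ :=
    SimpleGraph.exists_isClique_isIndepSet_of_inter_subsingleton M.fwdStates M.bwdStates
      fun _ hS _ hT => hM.inter_subsingleton hS hT
  exact ⟨G, hk ▸ Set.ncard_le_ncard hcliques, hℓ ▸ Set.ncard_le_ncard hcocliques⟩

/-- If a UFA has a forward determinization with `k` states and a backward
determinization with `ℓ` states, then there is a graph on its state set with at
least `k` cliques and at least `ℓ` cocliques. -/
theorem ufa_graph_many_cliques_cocliques {Q A : Type} [Fintype Q] [Fintype A]
    (M : NFA' Q A) (hM : M.Unambiguous) (k ℓ : ℕ)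
    (hk : M.fwdStates.ncard = k) (hℓ : M.bwdStates.ncard = ℓ) :
    ∃ G : SimpleGraph Q,
      k ≤ {X : Set Q | G.IsClique X}.ncard ∧
      ℓ ≤ {Y : Set Q | Y.Pairwise fun u v => ¬ G.Adj u v}.ncard :=
  ufa_graph_many_cliques_cocliques_general M hM k ℓ hk hℓ
end
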